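/- Let I, J ⊆ S and let w ∈ ᴵWᴶ. Set K := {s ∈ J : w s w^{-1} ∈ I} and M := {t ∈ I : w^{-1} t w ∈ J}. Then conjugation by w restricts to a bijection from K onto M, one has w W_K w^{-1} = W_M, and w w_{K,0} w^{-1} = w_{M,0}; equivalently, w · w_{K,0} = w_{M,0} · w. -/

import Mathlib

variable {B W : Type*} [Group W] {M : CoxeterMatrix B}

/-- `ᴵW`: the elements of minimal length in their right coset `W_I w`. -/
def minRight (cs : CoxeterSystem M W) (I : Set W) : Set W :=
  {w | ∀ v ∈ Subgroup.closure I, cs.length w ≤ cs.length (v * w)}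

/-- `Wᴶ`: the elements of minimal length in their left coset `w W_J`. -/
def minLeft (cs : CoxeterSystem M W) (J : Set W) : Set W :=
  {w | ∀ v ∈ Subgroup.closure J, cs.length w ≤ cs.length (w * v)}

/-- `ᴵWᴶ`: the minimal-length representatives of the double cosets `W_I\W/W_J`. -/
def minDouble (cs : CoxeterSystem M W) (I J : Set W) : Set W :=
  minRight cs I ∩ minLeft cs J

/-- `w` is the longest element of the standard parabolic subgroup generated by `X`. -/
def IsLongestOf (cs : CoxeterSystem M W) (X : Set W) (w : W) : Prop :=
  w ∈ Subgroup.closure X ∧ ∀ v ∈ Subgroup.closure X, cs.length v ≤ cs.length w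

/-!
Everything rests on Tits' sign representation of `W` on `W × ZMod 2`, where `s_i` acts by
`(t, a) ↦ (s_i t s_i, a + [t = s_i])`. It attaches to each `w` its set `N(w)` of right inversions,
which obeys the cocycle rule `N(xy) = N(y) ∆ y⁻¹ N(x) y`, has `ℓ(w)` elements and determines `w`.
If `w ∈ Wᴶ` then `N(w)` misses `W_J`, while `N(k) ⊆ W_J` for `k ∈ W_J`; so `ℓ(wk) = ℓ(w) + ℓ(k)`.
With the mirror statement for `ᴵW`, conjugation by `w ∈ ᴵWᴶ` maps `W_K` onto `W_M` preserving
length, hence carries `w_{K,0}` to a longest element of `W_M`. That one is unique, because its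
inversion set is forced to be the set of all reflections of `W_M`.
-/

theorem MulAut.ncard_preimage_conj {G : Type*} [Group G] (y : G) (S : Set G) :
    (MulAut.conj y ⁻¹' S).ncard = S.ncard :=
  Set.ncard_preimage_of_injective_subset_range (MulAut.conj y).injective
    (by simp [(MulAut.conj y).surjective.range_eq])

theorem MulAut.bijOn_conj_sep {G : Type*} [Group G] (g : G) (I J : Set G) :
    Set.BijOn (fun s => g * s * g⁻¹) {s ∈ J | g * s * g⁻¹ ∈ I} {t ∈ I | g⁻¹ * t * g ∈ J} :=
  (MulAut.conj g).bijOn fun s => by simp [mul_assoc, and_comm]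

namespace CoxeterSystem

open scoped Classical symmDiff

variable (cs : CoxeterSystem M W)

local prefix:100 "s" => cs.simple
local prefix:100 "π" => cs.wordProd
local prefix:100 "ℓ" => cs.length
local prefix:100 "ris " => cs.rightInvSeq

theorem simple_mul_mul_simple_eq_iff (i : B) (t x : W) :
    s i * t * s i = x ↔ t = s i * x * s i := by
  constructor <;> rintro rfl <;> simp [mul_assoc]

noncomputable def signPerm (i : B) : Equiv.Perm (W × ZMod 2) :=
  Function.Involutive.toPerm (fun p => (s i * p.1 * s i, p.2 + if p.1 = s i then 1 else 0))
    fun ⟨t, a⟩ => by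
      simp only [simple_mul_mul_simple_eq_iff, Prod.mk.injEq]
      simp [add_assoc, CharTwo.add_self_eq_zero]

theorem signPerm_apply (i : B) (t : W) (a : ZMod 2) :
    cs.signPerm i (t, a) = (s i * t * s i, a + if t = s i then 1 else 0) := rfl

theorem pow_signPerm_mul_signPerm_apply (i j : B) (k : ℕ) (t : W) (a : ZMod 2) :
    ((cs.signPerm i * cs.signPerm j) ^ k) (t, a) =
      ((s i * s j) ^ k * t * ((s i * s j) ^ k)⁻¹,
        a + ∑ p ∈ Finset.range (2 * k), if t = (s j * s i) ^ p * s j then 1 else 0) := by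
  induction k generalizing t a with
  | zero => simp
  | succ k ih =>
    have hshift (p : ℕ) : s i * (s j * t * s j) * s i = (s j * s i) ^ p * s j ↔
        t = (s j * s i) ^ (p + 1 + 1) * s j := by
      rw [simple_mul_mul_simple_eq_iff, simple_mul_mul_simple_eq_iff, pow_succ', pow_succ]
      simp only [mul_assoc]
    rw [pow_succ, Equiv.Perm.mul_apply, Equiv.Perm.mul_apply, signPerm_apply, signPerm_apply, ih]
    simp only [hshift, Prod.mk.injEq]
    constructor
    · simp [pow_succ, mul_assoc]
    · rw [show 2 * (k + 1) = 2 * k + 1 + 1 by ring, Finset.sum_range_succ', Finset.sum_range_succ']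
      simp only [zero_add, pow_zero, one_mul, pow_one, simple_mul_mul_simple_eq_iff]
      abel

theorem isLiftable_signPerm : M.IsLiftable cs.signPerm := by
  intro i j
  ext ⟨t, a⟩ : 1
  rw [pow_signPerm_mul_signPerm_apply, cs.simple_mul_simple_pow, two_mul, Finset.sum_range_add]
  -- the summand is `M i j`-periodic in `p`, so the parity count is twice a sum
  have hperiod (p : ℕ) : (s j * s i) ^ (M i j + p) = (s j * s i) ^ p := by
    rw [pow_add, M.symmetric, cs.simple_mul_simple_pow, one_mul]
  simp [hperiod, CharTwo.add_self_eq_zero]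

noncomputable def signRep : W →* Equiv.Perm (W × ZMod 2) :=
  cs.lift ⟨cs.signPerm, cs.isLiftable_signPerm⟩

theorem signRep_simple (i : B) : cs.signRep (s i) = cs.signPerm i :=
  cs.lift_apply_simple cs.isLiftable_signPerm i

theorem signRep_wordProd_apply (ω : List B) (t : W) (a : ZMod 2) :
    cs.signRep (π ω) (t, a) = (π ω * t * (π ω)⁻¹, a + (ris ω).count t) := by
  induction ω with
  | nil => simp
  | cons i ω ih =>
    have hconj : π ω * t * (π ω)⁻¹ = s i ↔ (π ω)⁻¹ * s i * π ω = t := by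
      constructor <;> intro h <;> rw [← h] <;> group
    rw [wordProd_cons, map_mul, Equiv.Perm.mul_apply, ih, signRep_simple, signPerm_apply,
      rightInvSeq, List.count_cons]
    simp only [hconj, beq_iff_eq, mul_inv_rev, inv_simple, Prod.mk.injEq]
    constructor
    · simp only [mul_assoc]
    · split_ifs <;> push_cast <;> ring

/-- Defined through the sign representation, which makes `rightInvSet_mul` immediate;
`mem_rightInvSet_iff` identifies it with `{t | cs.IsRightInversion w t}`. -/
def rightInvSet (w : W) : Set W := {t | (cs.signRep w (t, 0)).2 = 1}

theorem mem_rightInvSet_wordProd (ω : List B) (t : W) :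
    t ∈ cs.rightInvSet (π ω) ↔ Odd ((ris ω).count t) := by
  simp [rightInvSet, signRep_wordProd_apply, ZMod.natCast_eq_one_iff_odd]

theorem signRep_apply (w t : W) (a : ZMod 2) :
    cs.signRep w (t, a) = (w * t * w⁻¹, a + if t ∈ cs.rightInvSet w then 1 else 0) := by
  obtain ⟨ω, rfl⟩ := cs.wordProd_surjective w
  simp only [rightInvSet, Set.mem_ofPred_eq, signRep_wordProd_apply, zero_add, Prod.mk.injEq,
    true_and]
  generalize ((ris ω).count t : ZMod 2) = c
  revert a c
  decide

theorem rightInvSet_mul (x y : W) :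
    cs.rightInvSet (x * y) = cs.rightInvSet y ∆ (MulAut.conj y ⁻¹' cs.rightInvSet x) := by
  ext t
  have h := congrArg Prod.snd (cs.signRep_apply (x * y) t 0)
  rw [map_mul, Equiv.Perm.mul_apply, signRep_apply, signRep_apply] at h
  simp only [zero_add] at h
  simp only [Set.mem_symmDiff, Set.mem_preimage, MulAut.conj_apply]
  split_ifs at h <;> simp_all

theorem rightInvSet_one : cs.rightInvSet 1 = ∅ := by
  ext t
  simp [rightInvSet]

theorem rightInvSet_simple (i : B) : cs.rightInvSet (s i) = {s i} := by
  ext t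
  simp only [rightInvSet, signRep_simple, signPerm_apply, zero_add, Set.mem_ofPred_eq,
    Set.mem_singleton_iff]
  split_ifs <;> simp_all

theorem mem_rightInvSet_inv {x t : W} :
    t ∈ cs.rightInvSet x⁻¹ ↔ x⁻¹ * t * x ∈ cs.rightInvSet x := by
  have h := cs.rightInvSet_mul x⁻¹ x
  rw [inv_mul_cancel, rightInvSet_one, eq_comm, Set.symmDiff_eq_empty] at h
  rw [h, Set.mem_preimage, MulAut.conj_apply]
  group

theorem IsReduced.mem_rightInvSet_iff {ω : List B} (hω : cs.IsReduced ω) {t : W} :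
    t ∈ cs.rightInvSet (π ω) ↔ t ∈ ris ω := by
  rw [mem_rightInvSet_wordProd, hω.nodup_rightInvSeq.count]
  split_ifs <;> simp_all

theorem IsReduced.rightInvSet_eq {ω : List B} (hω : cs.IsReduced ω) :
    cs.rightInvSet (π ω) = ((ris ω).toFinset : Set W) := by
  ext t
  simp [hω.mem_rightInvSet_iff]

theorem finite_rightInvSet (w : W) : (cs.rightInvSet w).Finite := by
  obtain ⟨ω, hω, rfl⟩ := cs.exists_isReduced w
  rw [hω.rightInvSet_eq]
  exact Finset.finite_toSet _

theorem ncard_rightInvSet (w : W) : (cs.rightInvSet w).ncard = ℓ w := by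
  obtain ⟨ω, hω, rfl⟩ := cs.exists_isReduced w
  rw [hω.rightInvSet_eq, Set.ncard_coe_finset, List.toFinset_card_of_nodup hω.nodup_rightInvSeq,
    length_rightInvSeq, hω.eq]

theorem isRightInversion_of_mem_rightInvSet {w t : W} (ht : t ∈ cs.rightInvSet w) :
    cs.IsRightInversion w t := by
  obtain ⟨ω, hω, rfl⟩ := cs.exists_isReduced w
  exact cs.isRightInversion_of_mem_rightInvSeq hω (hω.mem_rightInvSet_iff.1 ht)

theorem IsReflection.mem_rightInvSet_self {t : W} (ht : cs.IsReflection t) :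
    t ∈ cs.rightInvSet t := by
  obtain ⟨x, i, rfl⟩ := ht
  have hconj : x⁻¹ * (x * s i * x⁻¹) * x = s i := by group
  simp only [rightInvSet_mul, Set.mem_symmDiff, Set.mem_preimage, MulAut.conj_apply, inv_inv,
    mem_rightInvSet_inv, hconj, rightInvSet_simple, Set.mem_singleton_iff, mul_inv_cancel_right]
  tauto

theorem mem_rightInvSet_iff {w t : W} : t ∈ cs.rightInvSet w ↔ cs.IsRightInversion w t := by
  refine ⟨cs.isRightInversion_of_mem_rightInvSet, fun ⟨hrefl, hlt⟩ => ?_⟩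
  by_contra ht
  have hmem : t ∈ cs.rightInvSet (w * t) := by
    rw [rightInvSet_mul, Set.mem_symmDiff, Set.mem_preimage, MulAut.conj_apply,
      mul_inv_cancel_right]
    exact Or.inl ⟨hrefl.mem_rightInvSet_self, ht⟩
  have := (cs.isRightInversion_of_mem_rightInvSet hmem).2
  rw [mul_assoc, hrefl.mul_self, mul_one] at this
  omega

theorem rightInvSet_injective : Function.Injective cs.rightInvSet := by
  intro x y h
  have hempty := cs.rightInvSet_mul (x * y⁻¹) y
  rw [inv_mul_cancel_right, h, eq_comm, symmDiff_eq_left] at hempty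
  have hlen : ℓ (x * y⁻¹) = 0 := by
    rw [← ncard_rightInvSet, ← MulAut.ncard_preimage_conj y, hempty, Set.bot_eq_empty,
      Set.ncard_empty]
  rwa [length_eq_zero_iff, mul_inv_eq_one] at hlen

variable {cs} {X : Set W}

theorem rightInvSet_subset_closure (hX : X ⊆ Set.range cs.simple) {k : W}
    (hk : k ∈ Subgroup.closure X) : cs.rightInvSet k ⊆ Subgroup.closure X := by
  induction hk using Subgroup.closure_induction with
  | mem x hx =>
    obtain ⟨i, rfl⟩ := hX hx
    simpa [rightInvSet_simple] using Subgroup.subset_closure hx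
  | one => simp [rightInvSet_one]
  | mul x y _ hy ihx ihy =>
    intro t ht
    rw [rightInvSet_mul, Set.mem_symmDiff, Set.mem_preimage, MulAut.conj_apply] at ht
    rcases ht with ⟨ht, -⟩ | ⟨ht, -⟩
    · exact ihy ht
    · simpa only [SetLike.mem_coe, Subgroup.mul_mem_cancel_right _ (inv_mem hy),
        Subgroup.mul_mem_cancel_left _ hy] using ihx ht
  | inv x hx ihx =>
    intro t ht
    rw [mem_rightInvSet_inv] at ht
    simpa only [SetLike.mem_coe, Subgroup.mul_mem_cancel_right _ hx,
      Subgroup.mul_mem_cancel_left _ (inv_mem hx)] using ihx ht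

theorem disjoint_rightInvSet_closure_of_mem_minLeft {w : W} (hw : w ∈ minLeft cs X) :
    Disjoint (cs.rightInvSet w) (Subgroup.closure X) :=
  Set.disjoint_left.2 fun t ht htX =>
    (hw t htX).not_gt (cs.isRightInversion_of_mem_rightInvSet ht).2

theorem length_mul_of_mem_minLeft (hX : X ⊆ Set.range cs.simple) {w k : W}
    (hw : w ∈ minLeft cs X) (hk : k ∈ Subgroup.closure X) : ℓ (w * k) = ℓ w + ℓ k := by
  have hdisj : Disjoint (cs.rightInvSet k) (MulAut.conj k ⁻¹' cs.rightInvSet w) := by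
    refine Set.disjoint_left.2 fun t htk htw => ?_
    have hconj : k * t * k⁻¹ ∈ Subgroup.closure X :=
      mul_mem (mul_mem hk (rightInvSet_subset_closure hX hk htk)) (inv_mem hk)
    exact Set.disjoint_left.1 (disjoint_rightInvSet_closure_of_mem_minLeft hw) htw hconj
  have hunion : cs.rightInvSet k ∆ (MulAut.conj k ⁻¹' cs.rightInvSet w) =
      cs.rightInvSet k ∪ MulAut.conj k ⁻¹' cs.rightInvSet w := hdisj.symmDiff_eq_sup
  rw [← ncard_rightInvSet, rightInvSet_mul, hunion,
    Set.ncard_union_eq hdisj (cs.finite_rightInvSet k)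
      ((cs.finite_rightInvSet w).preimage (MulAut.conj k).injective.injOn),
    MulAut.ncard_preimage_conj, ncard_rightInvSet, ncard_rightInvSet, add_comm]

theorem inv_mem_minLeft_of_mem_minRight {w : W} (hw : w ∈ minRight cs X) :
    w⁻¹ ∈ minLeft cs X := by
  intro v hv
  simpa [← cs.length_inv (w⁻¹ * v)] using hw v⁻¹ (inv_mem hv)

theorem length_mul_of_mem_minRight (hX : X ⊆ Set.range cs.simple) {w k : W}
    (hw : w ∈ minRight cs X) (hk : k ∈ Subgroup.closure X) : ℓ (k * w) = ℓ k + ℓ w := by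
  have := length_mul_of_mem_minLeft hX (inv_mem_minLeft_of_mem_minRight hw) (inv_mem hk)
  rwa [← mul_inv_rev, length_inv, length_inv, length_inv, add_comm] at this

theorem rightInvSet_eq_of_isLongestOf (hX : X ⊆ Set.range cs.simple) {u : W}
    (hu : IsLongestOf cs X u) :
    cs.rightInvSet u = {t | cs.IsReflection t ∧ t ∈ Subgroup.closure X} := by
  ext t
  refine ⟨fun ht => ⟨(cs.isRightInversion_of_mem_rightInvSet ht).1,
    rightInvSet_subset_closure hX hu.1 ht⟩, fun ⟨hrefl, htX⟩ => ?_⟩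
  exact cs.mem_rightInvSet_iff.2
    ⟨hrefl, (hu.2 _ (mul_mem hu.1 htX)).lt_of_ne (hrefl.length_mul_left_ne u)⟩

theorem length_conj_of_mem_minDouble {I J : Set W} (hI : I ⊆ Set.range cs.simple)
    (hJ : J ⊆ Set.range cs.simple) {w k : W} (hw : w ∈ minDouble cs I J)
    (hk : k ∈ Subgroup.closure J) (hk' : w * k * w⁻¹ ∈ Subgroup.closure I) :
    ℓ (w * k * w⁻¹) = ℓ k := by
  have hleft := length_mul_of_mem_minLeft hJ hw.2 hk
  have hright := length_mul_of_mem_minRight hI hw.1 hk'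
  rw [inv_mul_cancel_right, hleft] at hright
  omega

end CoxeterSystem

theorem IsLongestOf.unique {cs : CoxeterSystem M W} {X : Set W} (hX : X ⊆ Set.range cs.simple)
    {u u' : W} (hu : IsLongestOf cs X u) (hu' : IsLongestOf cs X u') : u = u' :=
  cs.rightInvSet_injective <| by
    rw [CoxeterSystem.rightInvSet_eq_of_isLongestOf hX hu,
      CoxeterSystem.rightInvSet_eq_of_isLongestOf hX hu']

theorem IsLongestOf.conj {cs : CoxeterSystem M W} {X Y : Set W} {u : W}
    (hu : IsLongestOf cs X u) (w : W)
    (hmap : (Subgroup.closure X).map (MulAut.conj w).toMonoidHom = Subgroup.closure Y)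
    (hlen : ∀ k ∈ Subgroup.closure X, cs.length (w * k * w⁻¹) = cs.length k) :
    IsLongestOf cs Y (w * u * w⁻¹) := by
  rw [IsLongestOf, ← hmap]
  refine ⟨⟨u, hu.1, rfl⟩, ?_⟩
  rintro _ ⟨k, hk, rfl⟩
  simp only [MulEquiv.coe_toMonoidHom, MulAut.conj_apply]
  rw [hlen k hk, hlen u hu.1]
  exact hu.2 k hk

theorem stmt_13_general (cs : CoxeterSystem M W)
    (I J : Set W) (hI : I ⊆ Set.range cs.simple) (hJ : J ⊆ Set.range cs.simple)
    (w : W) (hw : w ∈ minDouble cs I J)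
    (K Mset : Set W)
    (hK : K = {s ∈ J | w * s * w⁻¹ ∈ I}) (hM : Mset = {t ∈ I | w⁻¹ * t * w ∈ J})
    (wK0 : W) (hwK0 : IsLongestOf cs K wK0)
    (wM0 : W) (hwM0 : IsLongestOf cs Mset wM0) :
    Set.BijOn (fun s => w * s * w⁻¹) K Mset ∧
      Subgroup.map (MulAut.conj w).toMonoidHom (Subgroup.closure K) = Subgroup.closure Mset ∧
      w * wK0 * w⁻¹ = wM0 ∧ w * wK0 = wM0 * w := by
  subst hK hM
  have hbij := MulAut.bijOn_conj_sep w I J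
  have hmap : (Subgroup.closure {s ∈ J | w * s * w⁻¹ ∈ I}).map (MulAut.conj w).toMonoidHom =
      Subgroup.closure {t ∈ I | w⁻¹ * t * w ∈ J} := by
    rw [MonoidHom.map_closure, ← hbij.image_eq]
    rfl
  have hlen (k : W) (hk : k ∈ Subgroup.closure {s ∈ J | w * s * w⁻¹ ∈ I}) :
      cs.length (w * k * w⁻¹) = cs.length k := by
    have hk' : w * k * w⁻¹ ∈ Subgroup.closure {t ∈ I | w⁻¹ * t * w ∈ J} := hmap ▸ ⟨k, hk, rfl⟩
    exact CoxeterSystem.length_conj_of_mem_minDouble hI hJ hw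
      (Subgroup.closure_mono (fun _ h => h.1) hk) (Subgroup.closure_mono (fun _ h => h.1) hk')
  have hconj : w * wK0 * w⁻¹ = wM0 :=
    (hwK0.conj w hmap hlen).unique (fun _ h => hI h.1) hwM0
  exact ⟨hbij, hmap, hconj, by rw [← hconj, inv_mul_cancel_right]⟩

/-- Let `(W, S)` be a finite Coxeter system, `I, J ⊆ S`, `w ∈ ᴵWᴶ`,
`K := {s ∈ J : w s w⁻¹ ∈ I}` and `Mset := {t ∈ I : w⁻¹ t w ∈ J}`.  Then conjugation by `w`
restricts to a bijection from `K` onto `Mset`, one has `w W_K w⁻¹ = W_{Mset}`, and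
`w w_{K,0} w⁻¹ = w_{Mset,0}`; equivalently, `w ⬝ w_{K,0} = w_{Mset,0} ⬝ w`. -/
theorem stmt_13 [Finite W] (cs : CoxeterSystem M W)
    (I J : Set W) (hI : I ⊆ Set.range cs.simple) (hJ : J ⊆ Set.range cs.simple)
    (w : W) (hw : w ∈ minDouble cs I J)
    (K Mset : Set W)
    (hK : K = {s ∈ J | w * s * w⁻¹ ∈ I}) (hM : Mset = {t ∈ I | w⁻¹ * t * w ∈ J})
    (wK0 : W) (hwK0 : IsLongestOf cs K wK0)
    (wM0 : W) (hwM0 : IsLongestOf cs Mset wM0) :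
    Set.BijOn (fun s => w * s * w⁻¹) K Mset ∧
      Subgroup.map (MulAut.conj w).toMonoidHom (Subgroup.closure K) = Subgroup.closure Mset ∧
      w * wK0 * w⁻¹ = wM0 ∧ w * wK0 = wM0 * w :=
  stmt_13_general cs I J hI hJ w hw K Mset hK hM wK0 hwK0 wM0 hwM0
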